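/- If w is a little-endian base-3 digit list representing x ∈ ℕ, then appending a single 0 to w and applying the FST function F yields a list representing 2x whose length is |w| + 1. -/
import Mathlib


mutual
  def mul2F : List (Fin 3) → List (Fin 3)
    | [] => []
    | d :: w =>
      match d with
      | 0 => 0 :: mul2F w
      | 1 => 2 :: mul2F w
      | 2 => 1 :: mul2G w
  def mul2G : List (Fin 3) → List (Fin 3)
    | [] => [1]
    | d :: w =>
      match d with
      | 0 => 1 :: mul2F w
      | 1 => 0 :: mul2G w
      | 2 => 2 :: mul2G w
end

lemma mul2_key (w : List (Fin 3)) :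
    (Nat.ofDigits 3 ((mul2F (w ++ [0])).map Fin.val) = 2 * Nat.ofDigits 3 (w.map Fin.val) ∧
     (mul2F (w ++ [0])).length = w.length + 1) ∧
    (Nat.ofDigits 3 ((mul2G (w ++ [0])).map Fin.val) = 2 * Nat.ofDigits 3 (w.map Fin.val) + 1 ∧
     (mul2G (w ++ [0])).length = w.length + 1) := by
  induction w with
  | nil => simp [mul2F, mul2G, Nat.ofDigits]
  | cons d w ih =>
    obtain ⟨⟨hF, hFl⟩, hG, hGl⟩ := ih
    fin_cases d
    all_goals simp [mul2F, mul2G, Nat.ofDigits_cons, hF, hFl, hG, hGl]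
    all_goals refine ⟨?_, ?_⟩ <;> first | ring | trivial

theorem mul2_fst_padded_correct (w : List (Fin 3)) (x : ℕ)
    (hw : Nat.ofDigits 3 (w.map Fin.val) = x) :
    Nat.ofDigits 3 ((mul2F (w ++ [0])).map Fin.val) = 2 * x ∧
    (mul2F (w ++ [0])).length = w.length + 1 := by
  subst hw
  exact (mul2_key w).1
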